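/- arXiv:1111.0281 — 5 statements merged into one kernel-verified Lean document; each statement's English description precedes it below -/
import Mathlib

section
/- Let b = (√5 - 1)/2 be the golden mean, T(x) = 1/x - ⌊1/x⌋ the Gauss map on (0,1], A(x) = -log T'(x) = 2 log x, and m = 2 log b. Then the function u(x) = -2 log(1 + x·b) satisfies the subaction inequality u(x) ≤ u(T(x)) - A(x) + m for all x ∈ (0,1). -/
/-- For the Gauss map T, golden mean b, A(x) = 2 log x, m = 2 log b,
the function u(x) = -2 log(1 + x b) is a subaction on (0,1). -/
theorem stmt_3 (b : ℝ) (hb : b = (Real.sqrt 5 - 1) / 2)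
    (T : ℝ → ℝ) (hT : ∀ x, T x = 1 / x - ⌊(1 : ℝ) / x⌋)
    (A : ℝ → ℝ) (hA : ∀ x, A x = 2 * Real.log x)
    (m : ℝ) (hm : m = 2 * Real.log b)
    (u : ℝ → ℝ) (hu : ∀ x, u x = -2 * Real.log (1 + x * b)) :
    ∀ x ∈ Set.Ioo (0:ℝ) 1, u x ≤ u (T x) - A x + m := by
  intro x hx
  obtain ⟨hx0, hx1⟩ := hx
  have hs : (1:ℝ) < Real.sqrt 5 := by
    have : Real.sqrt 1 < Real.sqrt 5 := Real.sqrt_lt_sqrt (by norm_num) (by norm_num)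
    simpa using this
  have hb0 : 0 < b := by rw [hb]; linarith
  have hbsq : b ^ 2 + b = 1 := by
    have h : Real.sqrt 5 ^ 2 = 5 := Real.sq_sqrt (by norm_num)
    rw [hb]; nlinarith [h]
  set n : ℝ := ((⌊(1:ℝ)/x⌋ : ℤ) : ℝ) with hn
  have hinv : 1 < 1 / x := one_lt_one_div hx0 hx1
  have hn1 : (1:ℝ) ≤ n := by
    have : (1:ℤ) ≤ ⌊(1:ℝ)/x⌋ := Int.le_floor.mpr (by simpa using hinv.le)
    rw [hn]; exact_mod_cast this
  have hnle : n ≤ 1 / x := Int.floor_le _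
  have hT0 : 0 ≤ T x := by rw [hT x]; linarith
  have hxTx : x * T x = 1 - n * x := by
    rw [hT x]; field_simp; ring
  have hkey : x * (1 + T x * b) ≤ b * (1 + x * b) := by
    nlinarith [mul_nonneg (mul_nonneg hx0.le hb0.le) (sub_nonneg.mpr hn1)]
  have h1 : 0 < x * (1 + T x * b) := by
    have : 0 < 1 + T x * b := by nlinarith
    positivity
  have h2 : 0 < 1 + x * b := by nlinarith
  have hlog := Real.log_le_log h1 hkey
  rw [Real.log_mul hx0.ne' (by nlinarith), Real.log_mul hb0.ne' h2.ne'] at hlog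
  rw [hu x, hu (T x), hA x, hm]
  linarith
end

section
/- The function W(x,y) = (1/3)x² + (1/3)y² - (4/3)xy + (2/3)x + (1/3)y on [0,1]² satisfies ∂²W/∂x∂y = -4/3 < 0, and therefore satisfies the twist condition: W(a,b) + W(a',b') < W(a,b') + W(a',b) for all a < a', b < b' in [0,1]. -/
/-- W(x,y) = x²/3 + y²/3 - (4/3)xy + (2/3)x + (1/3)y has mixed second partial
derivative -4/3 < 0, hence satisfies the twist condition on [0,1]². -/
theorem stmt_6 (W : ℝ → ℝ → ℝ)
    (hW : ∀ x y, W x y = (1/3)*x^2 + (1/3)*y^2 - (4/3)*x*y + (2/3)*x + (1/3)*y) :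
    (∀ x y : ℝ, deriv (fun t : ℝ => deriv (fun s : ℝ => W s t) x) y = -4/3) ∧
    (∀ a ∈ Set.Icc (0:ℝ) 1, ∀ a' ∈ Set.Icc (0:ℝ) 1,
     ∀ b ∈ Set.Icc (0:ℝ) 1, ∀ b' ∈ Set.Icc (0:ℝ) 1,
      a < a' → b < b' → W a b + W a' b' < W a b' + W a' b) := by
  constructor
  · intro x y
    have h1 : (fun t : ℝ => deriv (fun s : ℝ => W s t) x)
        = fun t : ℝ => ((-4/3)*t + ((2/3)*x + 2/3)) := by
      funext t
      have hf : (fun s : ℝ => W s t)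
          = fun s : ℝ => (1/3)*s^2 + ((2/3) - (4/3)*t)*s + ((1/3)*t^2 + (1/3)*t) := by
        funext s; rw [hW]; ring
      rw [hf]
      have hd : HasDerivAt
          (fun s : ℝ => (1/3)*s^2 + ((2/3) - (4/3)*t)*s + ((1/3)*t^2 + (1/3)*t))
          ((1/3)*(2*x) + ((2/3) - (4/3)*t)) x := by
        have h2 := ((hasDerivAt_pow 2 x).const_mul (1/3:ℝ))
        have h3 := ((hasDerivAt_id x).const_mul ((2/3) - (4/3)*t))
        have := (h2.add h3).add_const ((1/3)*t^2 + (1/3)*t)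
        simpa [mul_comm] using this
      rw [hd.deriv]; ring
    rw [h1]
    have hd : HasDerivAt (fun t : ℝ => ((-4/3)*t + ((2/3)*x + 2/3))) (-4/3) y := by
      have := ((hasDerivAt_id y).const_mul (-4/3:ℝ)).add_const ((2/3)*x + 2/3)
      simpa using this
    exact hd.deriv
  · intro a _ a' _ b _ b' _ ha hb
    rw [hW, hW, hW, hW]
    nlinarith [mul_pos (sub_pos.2 ha) (sub_pos.2 hb)]
end

section
/- Let T(x) = -2x mod 1 on [0,1] with inverse branches τ₀(x) = (1-x)/2 and τ₁(x) = (2-x)/2, A(x) = -(x - 1/2)², and m = A(1/3) = -1/36. Define V₁(x) = -(1/3)x² + (1/9)x and V₂(x) = -(1/3)x² + (5/9)x - 2/9, and φ(x) = max{V₁(x), V₂(x)}. Then φ is a calibrated subaction: for all x ∈ [0,1], φ(x) = max{ φ(τ₀(x)) + A(τ₀(x)) - m, φ(τ₁(x)) + A(τ₁(x)) - m }. -/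
set_option maxHeartbeats 1000000


/-- For T(x) = -2x mod 1 with branches τ₀, τ₁, A(x) = -(x-1/2)², m = -1/36,
φ = max{V₁, V₂} is a calibrated subaction. -/
theorem stmt_8 (τ₀ τ₁ A V₁ V₂ φ : ℝ → ℝ) (m : ℝ)
    (hτ₀ : ∀ x, τ₀ x = (1 - x) / 2) (hτ₁ : ∀ x, τ₁ x = (2 - x) / 2)
    (hA : ∀ x, A x = -(x - 1/2)^2) (hm : m = -(1/36 : ℝ))
    (hV₁ : ∀ x, V₁ x = -(1/3)*x^2 + (1/9)*x)
    (hV₂ : ∀ x, V₂ x = -(1/3)*x^2 + (5/9)*x - 2/9)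
    (hφ : ∀ x, φ x = max (V₁ x) (V₂ x)) :
    ∀ x ∈ Set.Icc (0:ℝ) 1,
      φ x = max (φ (τ₀ x) + A (τ₀ x) - m) (φ (τ₁ x) + A (τ₁ x) - m) := by
  intro x hx
  obtain ⟨h0, h1⟩ := hx
  simp only [hφ, hτ₀, hτ₁, hA, hm, hV₁, hV₂, max_def]
  ring_nf
  split_ifs <;> linarith
end

section
/- Let T(x) = -2x mod 1 on [0,1] with inverse branches τ₀(x) = (1-x)/2 and τ₁(x) = (2-x)/2, A(x) = -(x-1)², and m = A(2/3) = -1/9. Then φ(x) = -(1/3)x² + (2/9)x is a calibrated subaction: for all x ∈ [0,1], φ(x) = max{ φ(τ₀(x)) + A(τ₀(x)) - m, φ(τ₁(x)) + A(τ₁(x)) - m }. -/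
/-- For T(x) = -2x mod 1 with branches τ₀, τ₁, A(x) = -(x-1)², m = -1/9,
φ(x) = -x²/3 + 2x/9 is a calibrated subaction. -/
theorem stmt_9 (τ₀ τ₁ A φ : ℝ → ℝ) (m : ℝ)
    (hτ₀ : ∀ x, τ₀ x = (1 - x) / 2) (hτ₁ : ∀ x, τ₁ x = (2 - x) / 2)
    (hA : ∀ x, A x = -(x - 1)^2) (hm : m = -(1/9 : ℝ))
    (hφ : ∀ x, φ x = -(1/3)*x^2 + (2/9)*x) :
    ∀ x ∈ Set.Icc (0:ℝ) 1,
      φ x = max (φ (τ₀ x) + A (τ₀ x) - m) (φ (τ₁ x) + A (τ₁ x) - m) := by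
  intro x hx
  obtain ⟨hx0, hx1⟩ := hx
  rw [max_eq_right]
  · rw [hτ₁, hφ, hφ, hA, hm]; ring
  · rw [hτ₀, hτ₁, hφ, hφ, hA, hA, hm]
    nlinarith [hx0, hx1]
end

section
/- Let W : X × Y → ℝ with X, Y linearly ordered and Δ(x,x',y) = W(x,y) - W(x',y), with y ↦ Δ(a,a',y) strictly increasing whenever a < a'. If x₀ < x₁ < z < x₂ in X and y₂ < y₁ < y₀ in Y, then Δ(x₀,x₁,y₀) + Δ(x₁,z,y₁) < Δ(x₀,x₂,y₀) + Δ(x₂,z,y₂). -/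
/-- Inserting an intermediate point to the left of z decreases the Δ-sum. -/
theorem stmt_12 {X Y : Type*} [LinearOrder X] [LinearOrder Y]
    (W : X → Y → ℝ) (Δ : X → X → Y → ℝ)
    (hΔ : ∀ x x' y, Δ x x' y = W x y - W x' y)
    (htwist : ∀ a a' : X, a < a' → StrictMono (fun y => Δ a a' y))
    (x₀ x₁ z x₂ : X) (y₀ y₁ y₂ : Y)
    (hx : x₀ < x₁ ∧ x₁ < z ∧ z < x₂) (hy : y₂ < y₁ ∧ y₁ < y₀) :
    Δ x₀ x₁ y₀ + Δ x₁ z y₁ < Δ x₀ x₂ y₀ + Δ x₂ z y₂ := by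
  have h1 := htwist x₁ z hx.2.1 hy.2
  have h2 := htwist z x₂ hx.2.2 (hy.1.trans hy.2)
  simp only [hΔ] at *
  linarith
end
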